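/- arXiv:2511.04168 — 8 statements merged into one kernel-verified Lean document; each statement's English description precedes it below -/
import Mathlib

section
/- Let λ, s, n be real numbers, and set t = s/√2, a₁ = −n, a₂ = n + λ. Let x, y, x̄, ȳ be real numbers with x ≠ 0, x̄ ≠ 0, y ≠ 0, y ≠ n, y + λ ≠ 0, ȳ ≠ 0, satisfying x·x̄ = (n − y)/(2y² + 2λy) and ȳ + y = −(2λx̄² − sx̄ − 1)/(2x̄²). Define q = −√2·x·y, p = (n − y)/(√2·x·y), q̄ = −√2·x̄·ȳ, p̄ = (n + 1 − ȳ)/(√2·x̄·ȳ). Then q̄ + q = p − t − a₂/p and p̄ + p = q̄ + t + (a₁ − 1)/q̄. -/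
/-!
The first equation of the system says exactly that `p = √2 x̄ (y + λ)`, and the second one, solved
for `ȳ`, reads `q̄ = p - t - 1/(√2 x̄)`. With these two substitutions the first Painlevé equation
becomes the first equation of the system again, and the second Painlevé equation is the
definition of `p̄`.
-/

open Real

section LaguerreSystem

variable {lam s n x y xb yb : ℝ}

lemma laguerre_first_eq_cleared (hy : y ≠ 0) (hyl : y + lam ≠ 0)
    (h1 : x * xb = (n - y) / (2 * y ^ 2 + 2 * lam * y)) :
    2 * (x * xb) * y * (y + lam) = n - y := by
  rw [h1]
  field_simp

lemma laguerre_p_eq (hx : x ≠ 0) (hy : y ≠ 0) (hyl : y + lam ≠ 0)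
    (h1 : x * xb = (n - y) / (2 * y ^ 2 + 2 * lam * y)) :
    (n - y) / (√2 * x * y) = √2 * xb * (y + lam) := by
  rw [← laguerre_first_eq_cleared hy hyl h1]
  field_simp
  rw [sq_sqrt zero_le_two]
  ring

lemma laguerre_add_div_p (hxb : xb ≠ 0) (hy : y ≠ 0) (hyl : y + lam ≠ 0)
    (h1 : x * xb = (n - y) / (2 * y ^ 2 + 2 * lam * y)) :
    (n + lam) / (√2 * xb * (y + lam)) = 1 / (√2 * xb) + √2 * x * y := by
  have key := laguerre_first_eq_cleared hy hyl h1
  field_simp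
  rw [sq_sqrt zero_le_two]
  linear_combination -key

lemma laguerre_qb_eq (hxb : xb ≠ 0)
    (h2 : yb + y = -(2 * lam * xb ^ 2 - s * xb - 1) / (2 * xb ^ 2)) :
    -√2 * xb * yb = √2 * xb * (y + lam) - s / √2 - 1 / (√2 * xb) := by
  have hyb : yb = -(2 * lam * xb ^ 2 - s * xb - 1) / (2 * xb ^ 2) - y := by linarith
  rw [hyb]
  field_simp
  rw [sq_sqrt zero_le_two]
  ring

lemma laguerre_pb_eq (hxb : xb ≠ 0) (hyb : yb ≠ 0) :
    (n + 1 - yb) / (√2 * xb * yb) = (-n - 1) / (-√2 * xb * yb) - 1 / (√2 * xb) := by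
  field_simp
  ring

end LaguerreSystem

theorem stmt3_general (lam s n t a1 a2 x y xb yb q p qb pb : ℝ)
    (ht : t = s / Real.sqrt 2) (ha1 : a1 = -n) (ha2 : a2 = n + lam)
    (hx : x ≠ 0) (hxb : xb ≠ 0) (hy : y ≠ 0) (hyl : y + lam ≠ 0) (hyb : yb ≠ 0)
    (h1 : x * xb = (n - y) / (2 * y ^ 2 + 2 * lam * y))
    (h2 : yb + y = -(2 * lam * xb ^ 2 - s * xb - 1) / (2 * xb ^ 2))
    (hq : q = -Real.sqrt 2 * x * y)
    (hp : p = (n - y) / (Real.sqrt 2 * x * y))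
    (hqb : qb = -Real.sqrt 2 * xb * yb)
    (hpb : pb = (n + 1 - yb) / (Real.sqrt 2 * xb * yb)) :
    qb + q = p - t - a2 / p ∧ pb + p = qb + t + (a1 - 1) / qb := by
  rw [laguerre_p_eq hx hy hyl h1] at hp
  have hqb' := laguerre_qb_eq hxb h2
  subst ht ha1 ha2 hq hp hqb hpb
  constructor
  · linear_combination hqb' + laguerre_add_div_p hxb hy hyl h1
  · linear_combination laguerre_pb_eq hxb hyb - hqb'

/-- the change of variables q = −√2 x y, p = (n − y)/(√2 x y), t = s/√2 transforms
the semiclassical Laguerre discrete system into the standard d-P(A₂⁽¹⁾/E₆⁽¹⁾) equation. -/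
theorem stmt3 (lam s n t a1 a2 x y xb yb q p qb pb : ℝ)
    (ht : t = s / Real.sqrt 2) (ha1 : a1 = -n) (ha2 : a2 = n + lam)
    (hx : x ≠ 0) (hxb : xb ≠ 0) (hy : y ≠ 0) (hyn : y ≠ n) (hyl : y + lam ≠ 0) (hyb : yb ≠ 0)
    (h1 : x * xb = (n - y) / (2 * y ^ 2 + 2 * lam * y))
    (h2 : yb + y = -(2 * lam * xb ^ 2 - s * xb - 1) / (2 * xb ^ 2))
    (hq : q = -Real.sqrt 2 * x * y)
    (hp : p = (n - y) / (Real.sqrt 2 * x * y))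
    (hqb : qb = -Real.sqrt 2 * xb * yb)
    (hpb : pb = (n + 1 - yb) / (Real.sqrt 2 * xb * yb)) :
    qb + q = p - t - a2 / p ∧ pb + p = qb + t + (a1 - 1) / qb :=
  stmt3_general lam s n t a1 a2 x y xb yb q p qb pb ht ha1 ha2 hx hxb hy hyl hyb h1 h2 hq hp hqb hpb
end

section
/- Let λ, s, n be real numbers, and set t = s/√2, a₁ = −n, a₂ = n + λ. Let q, p, q̄, p̄ be real numbers with q ≠ 0, p ≠ 0, q̄ ≠ 0, qp ≠ a₁ and q̄p̄ ≠ a₁ − 1, satisfying q̄ + q = p − t − a₂/p and p̄ + p = q̄ + t + (a₁ − 1)/q̄. Define x = q/(√2·(a₁ − qp)), y = qp − a₁, x̄ = q̄/(√2·((a₁ − 1) − q̄p̄)), ȳ = q̄p̄ − (a₁ − 1). Then x·x̄ = (n − y)/(2y² + 2λy) and ȳ + y = −(2λx̄² − sx̄ − 1)/(2x̄²). -/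
/-!
Put `u = q p + a₂ = y + λ`. Multiplied by `p`, the first d-P equation reads `p (q̄ + t − p) = −u`;
multiplied by `q̄`, the second reads `ȳ = q̄ (q̄ + t − p)`. Together they give the single relation
`ȳ p = −q̄ u`. Since `x = −q / (√2 y)` and `x̄ = −q̄ / (√2 ȳ)`, both equations of the Laguerre system
become, after clearing denominators, multiples of this relation (the second one also uses
`ȳ = q̄ (q̄ + t − p)` and `s = √2 t`).
-/

open Real

section DiscretePainleve

variable {t a1 a2 q p qb pb : ℝ}

theorem mul_sub_eq_of_dP_first (hp : p ≠ 0) (h1 : qb + q = p - t - a2 / p) :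
    p * (qb + t - p) = -(q * p + a2) := by
  field_simp at h1
  linear_combination h1

theorem shifted_y_eq_of_dP_second (hqb : qb ≠ 0) (h2 : pb + p = qb + t + (a1 - 1) / qb) :
    qb * pb - (a1 - 1) = qb * (qb + t - p) := by
  field_simp at h2
  linear_combination h2

end DiscretePainleve

section LaguerreSystem

variable {lam t q p qb y yb : ℝ}

theorem add_ne_zero_of_rel (hp : p ≠ 0) (hyb : yb ≠ 0) (hrel : yb * p = -qb * (y + lam)) :
    y + lam ≠ 0 := by
  intro h
  rw [h, mul_zero] at hrel
  exact (mul_eq_zero.mp hrel).elim hyb hp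

theorem laguerre_first_of_rel (hp : p ≠ 0) (hy : y ≠ 0) (hyb : yb ≠ 0)
    (hrel : yb * p = -qb * (y + lam)) :
    q / (√2 * -y) * (qb / (√2 * -yb)) = -(q * p) / (2 * y ^ 2 + 2 * lam * y) := by
  have hu := add_ne_zero_of_rel hp hyb hrel
  have hden : 2 * y ^ 2 + 2 * lam * y = 2 * y * (y + lam) := by ring
  rw [hden, div_mul_div_comm, div_eq_div_iff (by simp [hy, hyb]) (by simp [hy, hu])]
  linear_combination (2 * y * q) * hrel + (q * y * p * yb) * sq_sqrt zero_le_two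

theorem laguerre_second_of_rel (hqb : qb ≠ 0) (hyb : yb ≠ 0)
    (hyb_eq : yb = qb * (qb + t - p)) (hrel : yb * p = -qb * (y + lam)) :
    yb + y = -(2 * lam * (qb / (√2 * -yb)) ^ 2 - √2 * t * (qb / (√2 * -yb)) - 1) /
      (2 * (qb / (√2 * -yb)) ^ 2) := by
  field_simp
  linear_combination
    (yb * qb * t - yb ^ 2) * sq_sqrt zero_le_two - 2 * yb * hyb_eq + 2 * qb * hrel

end LaguerreSystem

theorem stmt4_general (lam s n t a1 a2 q p qb pb x y xb yb : ℝ)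
    (ht : t = s / Real.sqrt 2) (ha1 : a1 = -n) (ha2 : a2 = n + lam)
    (hp : p ≠ 0) (hqb : qb ≠ 0)
    (hqp : q * p ≠ a1) (hqbpb : qb * pb ≠ a1 - 1)
    (h1 : qb + q = p - t - a2 / p)
    (h2 : pb + p = qb + t + (a1 - 1) / qb)
    (hx : x = q / (Real.sqrt 2 * (a1 - q * p)))
    (hy : y = q * p - a1)
    (hxb : xb = qb / (Real.sqrt 2 * ((a1 - 1) - qb * pb)))
    (hyb : yb = qb * pb - (a1 - 1)) :
    x * xb = (n - y) / (2 * y ^ 2 + 2 * lam * y) ∧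
    yb + y = -(2 * lam * xb ^ 2 - s * xb - 1) / (2 * xb ^ 2) := by
  have hyb_eq : yb = qb * (qb + t - p) := hyb ▸ shifted_y_eq_of_dP_second hqb h2
  have hrel : yb * p = -qb * (y + lam) := by
    rw [hyb_eq, hy, ha1]
    linear_combination qb * mul_sub_eq_of_dP_first hp h1 - qb * ha2
  have hy0 : y ≠ 0 := hy ▸ sub_ne_zero.mpr hqp
  have hyb0 : yb ≠ 0 := hyb ▸ sub_ne_zero.mpr hqbpb
  obtain rfl : s = √2 * t := by rw [ht, mul_div_cancel₀ _ (by positivity)]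
  have hx' : x = q / (√2 * -y) := by rw [hx, hy]; ring_nf
  have hxb' : xb = qb / (√2 * -yb) := by rw [hxb, hyb]; ring_nf
  have hny : n - y = -(q * p) := by rw [hy, ha1]; ring
  rw [hx', hxb', hny]
  exact ⟨laguerre_first_of_rel hp hy0 hyb0 hrel, laguerre_second_of_rel hqb hyb0 hyb_eq hrel⟩

/-- the inverse change of variables x = q/(√2(a₁ − qp)), y = qp − a₁ transforms the
standard d-P(A₂⁽¹⁾/E₆⁽¹⁾) equation into the semiclassical Laguerre discrete system. -/
theorem stmt4 (lam s n t a1 a2 q p qb pb x y xb yb : ℝ)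
    (ht : t = s / Real.sqrt 2) (ha1 : a1 = -n) (ha2 : a2 = n + lam)
    (hq : q ≠ 0) (hp : p ≠ 0) (hqb : qb ≠ 0)
    (hqp : q * p ≠ a1) (hqbpb : qb * pb ≠ a1 - 1)
    (h1 : qb + q = p - t - a2 / p)
    (h2 : pb + p = qb + t + (a1 - 1) / qb)
    (hx : x = q / (Real.sqrt 2 * (a1 - q * p)))
    (hy : y = q * p - a1)
    (hxb : xb = qb / (Real.sqrt 2 * ((a1 - 1) - qb * pb)))
    (hyb : yb = qb * pb - (a1 - 1)) :
    x * xb = (n - y) / (2 * y ^ 2 + 2 * lam * y) ∧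
    yb + y = -(2 * lam * xb ^ 2 - s * xb - 1) / (2 * xb ^ 2) :=
  stmt4_general lam s n t a1 a2 q p qb pb x y xb yb ht ha1 ha2 hp hqb hqp hqbpb h1 h2 hx hy hxb hyb
end

section
/- Define birational maps on tuples (a₀, a₁, a₂; t; q, p) of real numbers by: w₂(a₀,a₁,a₂;t;q,p) = (a₀+a₂, a₁+a₂, −a₂; t; q + a₂/p, p); w₀(a₀,a₁,a₂;t;q,p) = (−a₀, a₁+a₀, a₂+a₀; t; q − a₀/(q−p+t), p − a₀/(q−p+t)); σ₂(a₀,a₁,a₂;t;q,p) = (−a₂, −a₁, −a₀; t; q, q − p + t); σ₁(a₀,a₁,a₂;t;q,p) = (−a₀, −a₂, −a₁; t; −p, −q). Then for all real a₀, a₁, a₂, t, q, p with a₀ + a₁ + a₂ = 1, p ≠ 0 and q + a₂/p − p + t ≠ 0, the composition σ₁ ∘ σ₂ ∘ w₀ ∘ w₂ maps (a₀, a₁, a₂; t; q, p) to (a₀, a₁ − 1, a₂ + 1; t; q̄, p̄), where q̄ = p − t − a₂/p − q and p̄ = q̄ + t + (a₁ − 1)/q̄ − p. -/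
/-!
The map w₀ shifts q and p by the same amount, so q - p + t is invariant under it; σ₂ moves
this invariant into the p-slot and σ₁ turns it into q̄ = -(q + a₂/p - p + t). The new p is
read off the other slot, -(q + a₂/p) + (a₀ + a₂)/(q + a₂/p - p + t), and the normalization
a₀ + a₂ = 1 - a₁ turns its last term into (a₁ - 1)/q̄.
-/

/-- The birational action of w₂ on (a₀, a₁, a₂; t; q, p). -/
noncomputable def w2Map : ℝ × ℝ × ℝ × ℝ × ℝ × ℝ → ℝ × ℝ × ℝ × ℝ × ℝ × ℝ :=
  fun (a0, a1, a2, t, q, p) => (a0 + a2, a1 + a2, -a2, t, q + a2 / p, p)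

/-- The birational action of w₀ on (a₀, a₁, a₂; t; q, p). -/
noncomputable def w0Map : ℝ × ℝ × ℝ × ℝ × ℝ × ℝ → ℝ × ℝ × ℝ × ℝ × ℝ × ℝ :=
  fun (a0, a1, a2, t, q, p) =>
    (-a0, a1 + a0, a2 + a0, t, q - a0 / (q - p + t), p - a0 / (q - p + t))

/-- The birational action of σ₂ on (a₀, a₁, a₂; t; q, p). -/
def sigma2Map : ℝ × ℝ × ℝ × ℝ × ℝ × ℝ → ℝ × ℝ × ℝ × ℝ × ℝ × ℝ :=
  fun (a0, a1, a2, t, q, p) => (-a2, -a1, -a0, t, q, q - p + t)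

/-- The birational action of σ₁ on (a₀, a₁, a₂; t; q, p). -/
def sigma1Map : ℝ × ℝ × ℝ × ℝ × ℝ × ℝ → ℝ × ℝ × ℝ × ℝ × ℝ × ℝ :=
  fun (a0, a1, a2, t, q, p) => (-a0, -a2, -a1, t, -p, -q)

theorem sigma1Map_sigma2Map_w0Map_w2Map (a0 a1 a2 t q p : ℝ) :
    sigma1Map (sigma2Map (w0Map (w2Map (a0, a1, a2, t, q, p)))) =
      (a0, -(a0 + a2), a0 + a1 + 2 * a2, t, -(q + a2 / p - p + t),
        -(q + a2 / p) + (a0 + a2) / (q + a2 / p - p + t)) := by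
  simp only [w2Map, w0Map, sigma2Map, sigma1Map, Prod.mk.injEq]
  exact ⟨by ring, neg_neg _, by ring, trivial, by ring, by ring⟩

theorem stmt7_general (a0 a1 a2 t q p : ℝ)
    (hnorm : a0 + a1 + a2 = 1) :
    sigma1Map (sigma2Map (w0Map (w2Map (a0, a1, a2, t, q, p)))) =
      (a0, a1 - 1, a2 + 1, t, p - t - a2 / p - q,
        (p - t - a2 / p - q) + t + (a1 - 1) / (p - t - a2 / p - q) - p) := by
  rw [sigma1Map_sigma2Map_w0Map_w2Map]
  obtain rfl : a0 = 1 - a1 - a2 := by linarith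
  have hqbar : p - t - a2 / p - q = -(q + a2 / p - p + t) := by ring
  simp only [hqbar, div_neg, Prod.mk.injEq]
  exact ⟨trivial, by ring, by ring, trivial, trivial, by ring⟩

/-- the composition σ₁ ∘ σ₂ ∘ w₀ ∘ w₂ realizes the translation generating the
standard discrete Painlevé equation of d-P(A₂⁽¹⁾/E₆⁽¹⁾) type. -/
theorem stmt7 (a0 a1 a2 t q p : ℝ)
    (hnorm : a0 + a1 + a2 = 1) (hp : p ≠ 0) (hden : q + a2 / p - p + t ≠ 0) :
    sigma1Map (sigma2Map (w0Map (w2Map (a0, a1, a2, t, q, p)))) =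
      (a0, a1 - 1, a2 + 1, t, p - t - a2 / p - q,
        (p - t - a2 / p - q) + t + (a1 - 1) / (p - t - a2 / p - q) - p) :=
  stmt7_general a0 a1 a2 t q p hnorm
end

section
/- Let Pic be the free ℤ-module of rank 10 with basis H_x, H_y, F₁, …, F₈, equipped with the symmetric bilinear form • determined by H_x•H_x = H_y•H_y = 0, H_x•H_y = 1, H_x•F_i = H_y•F_i = 0, and F_i•F_j = −δ_ij. Define δ₀ = F₇−F₈, δ₁ = H_x−F₂−F₃, δ₂ = H_y−F₄−F₅, δ₃ = F₅−F₆, δ₄ = F₄−F₅, δ₅ = H_x−F₁−F₄, δ₆ = F₆−F₇. Then: (i) the 7×7 matrix (δ_i•δ_j)_{i,j=0..6} equals the matrix with rows (−2,0,0,0,0,0,1), (0,−2,1,0,0,0,0), (0,1,−2,1,0,0,0), (0,0,1,−2,1,0,1), (0,0,0,1,−2,1,0), (0,0,0,0,1,−2,0), (1,0,0,1,0,0,−2) (the generalized Cartan matrix of affine type E₆⁽¹⁾); (ii) δ₀ + δ₁ + 2δ₂ + 3δ₃ + 2δ₄ + δ₅ + 2δ₆ = 2H_x + 2H_y − F₁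 − F₂ − F₃ − F₄ − F₅ − F₆ − F₇ − F₈. -/
/-- The Picard lattice: the free ℤ-module of rank 10. -/
abbrev Pic : Type := Fin 10 → ℤ

/-- The intersection form on the Picard lattice. -/
def ip (v w : Pic) : ℤ :=
  v 0 * w 1 + v 1 * w 0 - v 2 * w 2 - v 3 * w 3 - v 4 * w 4 - v 5 * w 5
    - v 6 * w 6 - v 7 * w 7 - v 8 * w 8 - v 9 * w 9

def Hx : Pic := Pi.single 0 1
def Hy : Pic := Pi.single 1 1
def F1 : Pic := Pi.single 2 1
def F2 : Pic := Pi.single 3 1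
def F3 : Pic := Pi.single 4 1
def F4 : Pic := Pi.single 5 1
def F5 : Pic := Pi.single 6 1
def F6 : Pic := Pi.single 7 1
def F7 : Pic := Pi.single 8 1
def F8 : Pic := Pi.single 9 1

/-- The surface root basis for the semiclassical Laguerre weight recurrence. -/
def sd : Fin 7 → Pic
  | 0 => F7 - F8
  | 1 => Hx - F2 - F3
  | 2 => Hy - F4 - F5
  | 3 => F5 - F6
  | 4 => F4 - F5
  | 5 => Hx - F1 - F4
  | 6 => F6 - F7

theorem ip_sd_sd (i j : Fin 7) :
    ip (sd i) (sd j) =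
      !![-2, 0, 0, 0, 0, 0, 1;
          0, -2, 1, 0, 0, 0, 0;
          0, 1, -2, 1, 0, 0, 0;
          0, 0, 1, -2, 1, 0, 1;
          0, 0, 0, 1, -2, 1, 0;
          0, 0, 0, 0, 1, -2, 0;
          1, 0, 0, 1, 0, 0, -2] i j := by
  fin_cases i <;> fin_cases j <;> rfl

theorem sd_weighted_sum_eq_anticanonical :
    sd 0 + sd 1 + (2 : ℤ) • sd 2 + (3 : ℤ) • sd 3 + (2 : ℤ) • sd 4 + sd 5 + (2 : ℤ) • sd 6 =
      (2 : ℤ) • Hx + (2 : ℤ) • Hy - F1 - F2 - F3 - F4 - F5 - F6 - F7 - F8 := by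
  decide

/-- the Gram matrix of the δᵢ is the generalized Cartan matrix of affine type
E₆⁽¹⁾, and the δᵢ decompose the anticanonical class with multiplicities (1,1,2,3,2,1,2). -/
theorem stmt11 :
    (∀ i j : Fin 7, ip (sd i) (sd j) =
      !![-2, 0, 0, 0, 0, 0, 1;
          0, -2, 1, 0, 0, 0, 0;
          0, 1, -2, 1, 0, 0, 0;
          0, 0, 1, -2, 1, 0, 1;
          0, 0, 0, 1, -2, 1, 0;
          0, 0, 0, 0, 1, -2, 0;
          1, 0, 0, 1, 0, 0, -2] i j) ∧
    sd 0 + sd 1 + (2 : ℤ) • sd 2 + (3 : ℤ) • sd 3 + (2 : ℤ) • sd 4 + sd 5 + (2 : ℤ) • sd 6 =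
      (2 : ℤ) • Hx + (2 : ℤ) • Hy - F1 - F2 - F3 - F4 - F5 - F6 - F7 - F8 := by
  exact ⟨ip_sd_sd, sd_weighted_sum_eq_anticanonical⟩
end

section
/- Let Pic be the free ℤ-module of rank 10 with basis H_x, H_y, F₁, …, F₈, equipped with the symmetric bilinear form • determined by H_x•H_x = H_y•H_y = 0, H_x•H_y = 1, H_x•F_i = H_y•F_i = 0, and F_i•F_j = −δ_ij. Let ψ: Pic → Pic be the ℤ-linear map determined on the basis by: H_x ↦ 4H_x+2H_y−F₂−F₃−2F₄−2F₅−2F₆−F₇−F₈; H_y ↦ 2H_x+H_y−F₄−F₅−F₆−F₇; F₁ ↦ 2H_x+H_y−F₄−F₅−F₆−F₇−F₈; F₂ ↦ 2H_x+H_y−F₃−F₄−F₅−F₆−F₇; F₃ ↦ 2H_x+H_y−F₂−F₄−F₅−F₆−F₇; F₄ ↦ H_x+H_y−F₄−F₅−F₆; F₅ ↦ H_x−F₆; F₆ ↦ H_x−F₅; F₇ ↦ H_x−F₄; F₈ ↦ F₁. Then ψ preserves the intersection form, i.e. ψ(C₁)•ψ(C₂) = C₁•C₂ for all C₁, C₂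 ∈ Pic, and ψ fixes the anticanonical class: ψ(2H_x + 2H_y − F₁ − ⋯ − F₈) = 2H_x + 2H_y − F₁ − ⋯ − F₈. -/
open Matrix

theorem LinearMap.apply_eq_mulVec_of_apply_single {R : Type*} [CommSemiring R] {m n : Type*}
    [Fintype n] [DecidableEq n] (f : (n → R) →ₗ[R] (m → R)) (A : Matrix m n R)
    (h : ∀ j, f (Pi.single j 1) = Aᵀ j) (v : n → R) : f v = A *ᵥ v := by
  have : f = toLin' A := by
    ext j i
    simp [h]
  simp [this]

theorem Matrix.dotProduct_mulVec_mulVec_of_transpose_mul_mul {R : Type*} [CommSemiring R]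
    {n : Type*} [Fintype n] {A G : Matrix n n R} (hA : Aᵀ * G * A = G) (v w : n → R) :
    (A *ᵥ v) ⬝ᵥ (G *ᵥ (A *ᵥ w)) = v ⬝ᵥ (G *ᵥ w) := by
  conv_rhs => rw [← hA, ← mulVec_mulVec, ← mulVec_mulVec, dotProduct_mulVec, vecMul_transpose]

def intersectionMatrix : Matrix (Fin 10) (Fin 10) ℤ :=
  !![0, 1, 0, 0, 0, 0, 0, 0, 0, 0;
     1, 0, 0, 0, 0, 0, 0, 0, 0, 0;
     0, 0, -1, 0, 0, 0, 0, 0, 0, 0;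
     0, 0, 0, -1, 0, 0, 0, 0, 0, 0;
     0, 0, 0, 0, -1, 0, 0, 0, 0, 0;
     0, 0, 0, 0, 0, -1, 0, 0, 0, 0;
     0, 0, 0, 0, 0, 0, -1, 0, 0, 0;
     0, 0, 0, 0, 0, 0, 0, -1, 0, 0;
     0, 0, 0, 0, 0, 0, 0, 0, -1, 0;
     0, 0, 0, 0, 0, 0, 0, 0, 0, -1]

theorem ip_eq_dotProduct_intersectionMatrix (v w : Pic) :
    ip v w = v ⬝ᵥ (intersectionMatrix *ᵥ w) := by
  simp [ip, intersectionMatrix, dotProduct, mulVec, Fin.sum_univ_succ, sub_eq_add_neg, add_assoc]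

/-- Written transposed: row `j` of the literal is the image of the `j`-th basis vector. -/
def psiMatrix : Matrix (Fin 10) (Fin 10) ℤ :=
  !![4, 2, 0, -1, -1, -2, -2, -2, -1, -1;
     2, 1, 0, 0, 0, -1, -1, -1, -1, 0;
     2, 1, 0, 0, 0, -1, -1, -1, -1, -1;
     2, 1, 0, 0, -1, -1, -1, -1, -1, 0;
     2, 1, 0, -1, 0, -1, -1, -1, -1, 0;
     1, 1, 0, 0, 0, -1, -1, -1, 0, 0;
     1, 0, 0, 0, 0, 0, 0, -1, 0, 0;
     1, 0, 0, 0, 0, 0, -1, 0, 0, 0;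
     1, 0, 0, 0, 0, -1, 0, 0, 0, 0;
     0, 0, 1, 0, 0, 0, 0, 0, 0, 0]ᵀ

theorem psiMatrix_transpose_mul_intersectionMatrix_mul :
    psiMatrixᵀ * intersectionMatrix * psiMatrix = intersectionMatrix := by
  decide

/-- the induced action ψ of the composed forward mapping on the Picard lattice
preserves the intersection form and fixes the anticanonical class. -/
theorem stmt13 (ψ : Pic →ₗ[ℤ] Pic)
    (hHx : ψ Hx = (4 : ℤ) • Hx + (2 : ℤ) • Hy - F2 - F3 - (2 : ℤ) • F4 - (2 : ℤ) • F5
      - (2 : ℤ) • F6 - F7 - F8)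
    (hHy : ψ Hy = (2 : ℤ) • Hx + Hy - F4 - F5 - F6 - F7)
    (hF1 : ψ F1 = (2 : ℤ) • Hx + Hy - F4 - F5 - F6 - F7 - F8)
    (hF2 : ψ F2 = (2 : ℤ) • Hx + Hy - F3 - F4 - F5 - F6 - F7)
    (hF3 : ψ F3 = (2 : ℤ) • Hx + Hy - F2 - F4 - F5 - F6 - F7)
    (hF4 : ψ F4 = Hx + Hy - F4 - F5 - F6)
    (hF5 : ψ F5 = Hx - F6)
    (hF6 : ψ F6 = Hx - F5)
    (hF7 : ψ F7 = Hx - F4)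
    (hF8 : ψ F8 = F1) :
    (∀ C1 C2 : Pic, ip (ψ C1) (ψ C2) = ip C1 C2) ∧
    ψ ((2 : ℤ) • Hx + (2 : ℤ) • Hy - F1 - F2 - F3 - F4 - F5 - F6 - F7 - F8) =
      (2 : ℤ) • Hx + (2 : ℤ) • Hy - F1 - F2 - F3 - F4 - F5 - F6 - F7 - F8 := by
  have hψ : ∀ v, ψ v = psiMatrix *ᵥ v := by
    refine LinearMap.apply_eq_mulVec_of_apply_single ψ psiMatrix fun j => ?_
    fin_cases j
    · exact hHx.trans (by decide)
    · exact hHy.trans (by decide)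
    · exact hF1.trans (by decide)
    · exact hF2.trans (by decide)
    · exact hF3.trans (by decide)
    · exact hF4.trans (by decide)
    · exact hF5.trans (by decide)
    · exact hF6.trans (by decide)
    · exact hF7.trans (by decide)
    · exact hF8.trans (by decide)
  refine ⟨fun C1 C2 => ?_, ?_⟩
  · simp only [hψ, ip_eq_dotProduct_intersectionMatrix]
    exact dotProduct_mulVec_mulVec_of_transpose_mul_mul
      psiMatrix_transpose_mul_intersectionMatrix_mul C1 C2
  · rw [hψ]
    decide
end

section
/- Let Pic be the free ℤ-module of rank 10 with basis H_x, H_y, F₁, …, F₈, and let ψ: Pic → Pic be the ℤ-linear map determined on the basis by: H_x ↦ 4H_x+2H_y−F₂−F₃−2F₄−2F₅−2F₆−F₇−F₈; H_y ↦ 2H_x+H_y−F₄−F₅−F₆−F₇; F₁ ↦ 2H_x+H_y−F₄−F₅−F₆−F₇−F₈; F₂ ↦ 2H_x+H_y−F₃−F₄−F₅−F₆−F₇; F₃ ↦ 2H_x+H_y−F₂−F₄−F₅−F₆−F₇; F₄ ↦ H_x+H_y−F₄−F₅−F₆; F₅ ↦ H_x−F₆; F₆ ↦ H_x−F₅; F₇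 ↦ H_x−F₄; F₈ ↦ F₁. Define α₀ = 2H_x+H_y−F₃−F₄−F₅−F₆−F₇−F₈, α₁ = H_y−F₁−F₃, α₂ = F₃−F₂, and δ = 2H_x + 2H_y − F₁ − ⋯ − F₈. Then ψ(α₀) = α₀ + δ, ψ(α₁) = α₁ − δ, and ψ(α₂) = α₂. -/
/-- The (preliminary) symmetry root basis for the semiclassical Laguerre weight recurrence. -/
def sa : Fin 3 → Pic
  | 0 => (2 : ℤ) • Hx + Hy - F3 - F4 - F5 - F6 - F7 - F8
  | 1 => Hy - F1 - F3
  | 2 => F3 - F2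

/-- The anticanonical class δ = −K. -/
def antiK : Pic := (2 : ℤ) • Hx + (2 : ℤ) • Hy - F1 - F2 - F3 - F4 - F5 - F6 - F7 - F8

/-- ψ acts on the symmetry root lattice as the translation
α ↦ α + ⟨1, −1, 0⟩δ. -/
theorem stmt14 (ψ : Pic →ₗ[ℤ] Pic)
    (hHx : ψ Hx = (4 : ℤ) • Hx + (2 : ℤ) • Hy - F2 - F3 - (2 : ℤ) • F4 - (2 : ℤ) • F5
      - (2 : ℤ) • F6 - F7 - F8)
    (hHy : ψ Hy = (2 : ℤ) • Hx + Hy - F4 - F5 - F6 - F7)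
    (hF1 : ψ F1 = (2 : ℤ) • Hx + Hy - F4 - F5 - F6 - F7 - F8)
    (hF2 : ψ F2 = (2 : ℤ) • Hx + Hy - F3 - F4 - F5 - F6 - F7)
    (hF3 : ψ F3 = (2 : ℤ) • Hx + Hy - F2 - F4 - F5 - F6 - F7)
    (hF4 : ψ F4 = Hx + Hy - F4 - F5 - F6)
    (hF5 : ψ F5 = Hx - F6)
    (hF6 : ψ F6 = Hx - F5)
    (hF7 : ψ F7 = Hx - F4)
    (hF8 : ψ F8 = F1) :
    ψ (sa 0) = sa 0 + antiK ∧ ψ (sa 1) = sa 1 - antiK ∧ ψ (sa 2) = sa 2 := by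
  simp only [sa, antiK, map_add, map_sub, map_smul, hHx, hHy, hF1, hF2, hF3, hF4, hF5, hF6,
    hF7, hF8]
  exact ⟨by module, by module, by module⟩
end

section
/- Let Pic be the free ℤ-module of rank 10 with basis written either as H_q, H_p, E₁, …, E₈ or as H_x, H_y, F₁, …, F₈, equipped with the symmetric bilinear form • determined by H•H = 0 for each of the two H-generators, H_q•H_p = 1 (resp. H_x•H_y = 1), H•E_i = 0 and E_i•E_j = −δ_ij. Let T: Pic → Pic be the ℤ-linear map determined by T(H_q) = H_x+H_y−F₃−F₄, T(H_p) = H_x, T(E₁) = H_x−F₃, T(E₂) = F₂, T(E₃) = H_x−F₄, T(E₄) = F₁, T(E_i) = F_i for i = 5,6,7,8, and let S: Pic → Pic be determined by S(H_x) = H_p, S(H_y) = H_q+H_p−E₁−E₃, S(F₁) = E₄, S(F₂) = E₂, S(F₃) = H_p−E₁, S(F₄) = H_p−E₃, S(F_i) = E_i for i = 5,6,7,8. Then: (i) S ∘ T and T ∘ S are the identity on Pic; (ii) T preserves the intersection form; (iii) T maps the standard surface roots (E₇−E₈, E₁−E₂, H_q−E₁−E₅, E₅−E₆, H_p−E₃−E₅,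 E₃−E₄, E₆−E₇) respectively to (F₇−F₈, H_x−F₂−F₃, H_y−F₄−F₅, F₅−F₆, F₄−F₅, H_x−F₁−F₄, F₆−F₇). -/
def Hq : Pic := Pi.single 0 1
def Hp : Pic := Pi.single 1 1
def E1 : Pic := Pi.single 2 1
def E2 : Pic := Pi.single 3 1
def E3 : Pic := Pi.single 4 1
def E4 : Pic := Pi.single 5 1
def E5 : Pic := Pi.single 6 1
def E6 : Pic := Pi.single 7 1
def E7 : Pic := Pi.single 8 1
def E8 : Pic := Pi.single 9 1

/-! Everything is a finite check: a linear map out of `Pic` is determined by the images of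
either basis, so `S ∘ T` and `T ∘ S` are compared with the identity on ten generators, and in
coordinates the invariance of the intersection form is a polynomial identity. -/

theorem Pic.eq_sum_E (v : Pic) :
    v = v 0 • Hq + v 1 • Hp + v 2 • E1 + v 3 • E2 + v 4 • E3 + v 5 • E4
      + v 6 • E5 + v 7 • E6 + v 8 • E7 + v 9 • E8 := by
  ext j
  fin_cases j <;> simp [Hq, Hp, E1, E2, E3, E4, E5, E6, E7, E8]

theorem Pic.linearMap_apply_eq_E {M : Type*} [AddCommGroup M] (f : Pic →ₗ[ℤ] M) (v : Pic) :
    f v = v 0 • f Hq + v 1 • f Hp + v 2 • f E1 + v 3 • f E2 + v 4 • f E3 + v 5 • f E4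
      + v 6 • f E5 + v 7 • f E6 + v 8 • f E7 + v 9 • f E8 := by
  conv_lhs => rw [Pic.eq_sum_E v]
  simp only [map_add, map_zsmul]

theorem Pic.linearMap_ext_E {M : Type*} [AddCommGroup M] {f g : Pic →ₗ[ℤ] M}
    (hHq : f Hq = g Hq) (hHp : f Hp = g Hp) (hE1 : f E1 = g E1) (hE2 : f E2 = g E2)
    (hE3 : f E3 = g E3) (hE4 : f E4 = g E4) (hE5 : f E5 = g E5) (hE6 : f E6 = g E6)
    (hE7 : f E7 = g E7) (hE8 : f E8 = g E8) : f = g :=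
  LinearMap.ext fun v => by
    rw [Pic.linearMap_apply_eq_E f, Pic.linearMap_apply_eq_E g, hHq, hHp, hE1, hE2, hE3, hE4,
      hE5, hE6, hE7, hE8]

theorem Pic.linearMap_ext_F {M : Type*} [AddCommGroup M] {f g : Pic →ₗ[ℤ] M}
    (hHx : f Hx = g Hx) (hHy : f Hy = g Hy) (hF1 : f F1 = g F1) (hF2 : f F2 = g F2)
    (hF3 : f F3 = g F3) (hF4 : f F4 = g F4) (hF5 : f F5 = g F5) (hF6 : f F6 = g F6)
    (hF7 : f F7 = g F7) (hF8 : f F8 = g F8) : f = g :=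
  Pic.linearMap_ext_E hHx hHy hF1 hF2 hF3 hF4 hF5 hF6 hF7 hF8

/-- the preliminary change of basis T of the Picard lattice is invertible
(with inverse S), preserves the intersection form, and identifies the standard E₆⁽¹⁾ surface
root basis with the one for the semiclassical Laguerre weight recurrence. -/
theorem stmt15 (T S : Pic →ₗ[ℤ] Pic)
    (hTHq : T Hq = Hx + Hy - F3 - F4) (hTHp : T Hp = Hx)
    (hTE1 : T E1 = Hx - F3) (hTE2 : T E2 = F2)
    (hTE3 : T E3 = Hx - F4) (hTE4 : T E4 = F1)
    (hTE5 : T E5 = F5) (hTE6 : T E6 = F6) (hTE7 : T E7 = F7) (hTE8 : T E8 = F8)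
    (hSHx : S Hx = Hp) (hSHy : S Hy = Hq + Hp - E1 - E3)
    (hSF1 : S F1 = E4) (hSF2 : S F2 = E2)
    (hSF3 : S F3 = Hp - E1) (hSF4 : S F4 = Hp - E3)
    (hSF5 : S F5 = E5) (hSF6 : S F6 = E6) (hSF7 : S F7 = E7) (hSF8 : S F8 = E8) :
    S.comp T = LinearMap.id ∧ T.comp S = LinearMap.id ∧
    (∀ C1 C2 : Pic, ip (T C1) (T C2) = ip C1 C2) ∧
    T (E7 - E8) = F7 - F8 ∧
    T (E1 - E2) = Hx - F2 - F3 ∧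
    T (Hq - E1 - E5) = Hy - F4 - F5 ∧
    T (E5 - E6) = F5 - F6 ∧
    T (Hp - E3 - E5) = F4 - F5 ∧
    T (E3 - E4) = Hx - F1 - F4 ∧
    T (E6 - E7) = F6 - F7 := by
  have hT (v : Pic) :
      T v = v 0 • (Hx + Hy - F3 - F4) + v 1 • Hx + v 2 • (Hx - F3) + v 3 • F2
        + v 4 • (Hx - F4) + v 5 • F1 + v 6 • F5 + v 7 • F6 + v 8 • F7 + v 9 • F8 := by
    rw [Pic.linearMap_apply_eq_E T v, hTHq, hTHp, hTE1, hTE2, hTE3, hTE4, hTE5, hTE6, hTE7,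
      hTE8]
  have hST : S.comp T = LinearMap.id := by
    apply Pic.linearMap_ext_E <;>
      simp only [LinearMap.comp_apply, LinearMap.id_apply, map_add, map_sub, hTHq, hTHp, hTE1,
        hTE2, hTE3, hTE4, hTE5, hTE6, hTE7, hTE8, hSHx, hSHy, hSF1, hSF2, hSF3, hSF4, hSF5, hSF6,
        hSF7, hSF8] <;> abel
  have hTS : T.comp S = LinearMap.id := by
    apply Pic.linearMap_ext_F <;>
      simp only [LinearMap.comp_apply, LinearMap.id_apply, map_add, map_sub, hTHq, hTHp, hTE1,
        hTE2, hTE3, hTE4, hTE5, hTE6, hTE7, hTE8, hSHx, hSHy, hSF1, hSF2, hSF3, hSF4, hSF5, hSF6,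
        hSF7, hSF8] <;> abel
  have hip (C1 C2 : Pic) : ip (T C1) (T C2) = ip C1 C2 := by
    simp only [hT, ip, Hx, Hy, F1, F2, F3, F4, F5, F6, F7, F8, Pi.add_apply, Pi.sub_apply,
      Pi.smul_apply, smul_eq_mul, Pi.single_apply, Fin.reduceEq, ↓reduceIte, mul_one, mul_zero]
    ring
  refine ⟨hST, hTS, hip, ?_, ?_, ?_, ?_, ?_, ?_, ?_⟩ <;>
    simp only [map_sub, hTHq, hTHp, hTE1, hTE2, hTE3, hTE4, hTE5, hTE6, hTE7, hTE8] <;> abel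
end

section
/- Let L = ℤ³ with basis α₀, α₁, α₂ and set δ = α₀ + α₁ + α₂. Define ℤ-linear maps on L by: W₁(α₀) = α₀ + α₁, W₁(α₁) = −α₁, W₁(α₂) = α₂ + α₁; Φ(α₀) = α₀, Φ(α₁) = α₁ + δ, Φ(α₂) = α₂ − δ; Ψ(α₀) = α₀ + δ, Ψ(α₁) = α₁ − δ, Ψ(α₂) = α₂. Then W₁ ∘ W₁ is the identity, and W₁ ∘ Φ ∘ W₁ = Ψ. -/
/-!
The reflection W₁ fixes the null root δ, so the δ-shifts of Φ pass through the conjugation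
unchanged; both identities then reduce to a check on the basis α₀, α₁, α₂.
-/

/-- The A₂⁽¹⁾ root lattice: the free ℤ-module of rank 3 with basis α₀, α₁, α₂. -/
abbrev RootLat : Type := Fin 3 → ℤ

/-- The basis vectors α₀, α₁, α₂. -/
def al (i : Fin 3) : RootLat := Pi.single i 1

/-- The null root δ = α₀ + α₁ + α₂. -/
def dlt : RootLat := al 0 + al 1 + al 2

theorem RootLat.linearMap_ext {M : Type*} [AddCommGroup M] {f g : RootLat →ₗ[ℤ] M}
    (h0 : f (al 0) = g (al 0)) (h1 : f (al 1) = g (al 1)) (h2 : f (al 2) = g (al 2)) :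
    f = g := by
  refine LinearMap.pi_ext fun i n => ?_
  have hsingle : (Pi.single i n : RootLat) = n • al i := by
    rw [al, ← Pi.single_smul, smul_eq_mul, mul_one]
  rw [hsingle, map_zsmul, map_zsmul]
  fin_cases i
  exacts [congrArg _ h0, congrArg _ h1, congrArg _ h2]

theorem map_dlt_of_reflection_al_one (W : RootLat →ₗ[ℤ] RootLat)
    (hW0 : W (al 0) = al 0 + al 1) (hW1 : W (al 1) = -al 1) (hW2 : W (al 2) = al 2 + al 1) :
    W dlt = dlt := by
  simp only [dlt, map_add, hW0, hW1, hW2]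
  abel

/-- W₁ is an involution and conjugates the translation Φ (for the standard
discrete Painlevé equation) into the translation Ψ (for the semiclassical Laguerre
recurrence): W₁ ∘ Φ ∘ W₁ = Ψ. -/
theorem stmt18 (W1 Φ Ψ : RootLat →ₗ[ℤ] RootLat)
    (hW0 : W1 (al 0) = al 0 + al 1)
    (hW1 : W1 (al 1) = -al 1)
    (hW2 : W1 (al 2) = al 2 + al 1)
    (hP0 : Φ (al 0) = al 0)
    (hP1 : Φ (al 1) = al 1 + dlt)
    (hP2 : Φ (al 2) = al 2 - dlt)
    (hQ0 : Ψ (al 0) = al 0 + dlt)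
    (hQ1 : Ψ (al 1) = al 1 - dlt)
    (hQ2 : Ψ (al 2) = al 2) :
    W1.comp W1 = LinearMap.id ∧ W1.comp (Φ.comp W1) = Ψ := by
  have hWδ : W1 dlt = dlt := map_dlt_of_reflection_al_one W1 hW0 hW1 hW2
  constructor
  · refine RootLat.linearMap_ext ?_ ?_ ?_ <;>
      simp only [LinearMap.comp_apply, LinearMap.id_apply, map_add, map_neg, hW0, hW1, hW2] <;>
      abel
  · refine RootLat.linearMap_ext ?_ ?_ ?_ <;>
      simp only [LinearMap.comp_apply, map_add, map_neg, map_sub, hW0, hW1, hW2, hP0, hP1, hP2,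
        hQ0, hQ1, hQ2, hWδ] <;>
      abel
end
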